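/- arXiv:math/0012003 — 2 statements merged into one kernel-verified Lean document; each statement's English description precedes it below -/
import Mathlib

section
/- Let ζ = diag(1, -1) ∈ GL(2, ℤ) and let B ∈ SL(2, ℤ) satisfy ζBζ = B⁻¹ and have finite order, with either B = -I or B having no real eigenvalues. Then B = I, B = -I, or B = ±[[0,-1],[1,0]]. -/
theorem stmt_0 (B : Matrix (Fin 2) (Fin 2) ℤ)
    (hdet : B.det = 1)
    (hord : ∃ n : ℕ, 0 < n ∧ B ^ n = 1)
    (hconj : !![1, 0; 0, -1] * B * !![1, 0; 0, -1] = B⁻¹)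
    (heig : B = -1 ∨ ∀ x : ℝ, Polynomial.eval x (B.charpoly.map (Int.castRingHom ℝ)) ≠ 0) :
    B = 1 ∨ B = -1 ∨ B = !![0, -1; 1, 0] ∨ B = -!![0, -1; 1, 0] := by
  rcases heig with h | heig
  · exact Or.inr (Or.inl h)
  obtain ⟨a, b, c, d, hE⟩ : ∃ a b c d, B = !![a, b; c, d] :=
    ⟨B 0 0, B 0 1, B 1 0, B 1 1, Matrix.eta_fin_two B⟩
  have hBinv : B⁻¹ = !![d, -b; -c, a] := by
    rw [Matrix.inv_def, hdet, hE, Matrix.adjugate_fin_two]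
    simp
  rw [hBinv, hE] at hconj
  have h00 := congrFun (congrFun hconj 0) 0
  have h01 := congrFun (congrFun hconj 0) 1
  simp [Matrix.mul_apply, Fin.sum_univ_two] at h00 h01
  -- h00 : a = d
  have hdet2 : a * d - b * c = 1 := by
    rw [hE, Matrix.det_fin_two] at hdet; simpa using hdet
  have hchar : B.charpoly = Polynomial.X ^ 2 - Polynomial.C (a + d) * Polynomial.X + Polynomial.C 1 := by
    rw [Matrix.charpoly, Matrix.det_fin_two, Matrix.charmatrix_apply_eq,
      Matrix.charmatrix_apply_eq, Matrix.charmatrix_apply_ne _ _ _ (by decide),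
      Matrix.charmatrix_apply_ne _ _ _ (by decide), hE]
    norm_num [Matrix.cons_val_zero, Matrix.cons_val_one, Matrix.head_cons]
    have h : ((a*d-b*c : ℤ) : Polynomial ℤ) = ((1:ℤ) : Polynomial ℤ) := by rw [hdet2]
    push_cast at h
    linear_combination h
  have ha : a = 0 := by
    by_contra ha
    have ha2 : (1:ℤ) ≤ a ^ 2 := by nlinarith [sq_nonneg a, Int.one_le_abs ha, sq_abs a]
    have hsq : (1:ℝ) ≤ (a:ℝ) ^ 2 := by exact_mod_cast ha2
    set x : ℝ := (a : ℝ) with hx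
    apply heig (x + Real.sqrt (x ^ 2 - 1))
    have h1 : Real.sqrt (x ^ 2 - 1) ^ 2 = x ^ 2 - 1 := Real.sq_sqrt (by linarith)
    rw [hchar, ← h00]
    push_cast
    simp only [Polynomial.eval_add, Polynomial.eval_sub, Polynomial.eval_mul, Polynomial.eval_pow,
      Polynomial.eval_X, Polynomial.eval_C, Polynomial.map_add, Polynomial.map_sub,
      Polynomial.map_mul, Polynomial.map_pow, Polynomial.map_X, Polynomial.map_C,
      Int.coe_castRingHom]
    push_cast
    linear_combination h1
  have hd : d = 0 := by rw [← h00]; exact ha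
  have hbc : b * c = -1 := by rw [ha, hd] at hdet2; linarith
  have hb : b = 1 ∨ b = -1 :=
    Int.isUnit_iff.mp (IsUnit.of_mul_eq_one (a := b) (-c) (by linarith [hbc]))
  rcases hb with hb | hb
  · have hc : c = -1 := by nlinarith [hbc]
    right; right; right
    rw [hE, ha, hb, hc, hd]
    ext i j
    fin_cases i <;> fin_cases j <;> simp
  · have hc : c = 1 := by nlinarith [hbc]
    right; right; left
    rw [hE, ha, hb, hc, hd]
end

section
/- Let A ∈ GL(2, ℤ) with A² = I and A ≠ ±I (so A has eigenvalues 1 and -1). Then either A is conjugate in GL(2, ℤ) to diag(1, -1), or A is conjugate in GL(2, ℤ) to the swap matrix [[0,1],[1,0]], and these two cases are mutually exclusive. -/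
namespace Stmt15Aux

abbrev M2 := Matrix (Fin 2) (Fin 2) ℤ

def ConjTo (A B : M2) : Prop :=
  ∃ P : M2ˣ, (P : M2) * A * (↑P⁻¹ : M2) = B

lemma conjTo_of (M N A B : M2) (hMN : M * N = 1) (hNM : N * M = 1)
    (h : M * A * N = B) : ConjTo A B :=
  ⟨⟨M, N, hMN, hNM⟩, h⟩

lemma conjTo_trans {A B C : M2} (h1 : ConjTo A B) (h2 : ConjTo B C) : ConjTo A C := by
  obtain ⟨P, hP⟩ := h1
  obtain ⟨Q, hQ⟩ := h2
  refine ⟨Q * P, ?_⟩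
  rw [mul_inv_rev, Units.val_mul, Units.val_mul, ← hQ, ← hP]
  simp only [mul_assoc]

/-- Conjugation by !![1,k;0,1]. -/
lemma step_upper (a b c k : ℤ) :
    ConjTo !![a, b; c, -a] !![a + k*c, b - 2*k*a - k^2*c; c, -(a + k*c)] := by
  apply conjTo_of !![1, k; 0, 1] !![1, -k; 0, 1]
  · rw [Matrix.mul_fin_two, Matrix.one_fin_two]; ring_nf
  · rw [Matrix.mul_fin_two, Matrix.one_fin_two]; ring_nf
  · rw [Matrix.mul_fin_two, Matrix.mul_fin_two]; ring_nf

/-- Conjugation by !![1,0;k,1]. -/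
lemma step_lower (a b c k : ℤ) :
    ConjTo !![a, b; c, -a] !![a - k*b, b; c + 2*k*a - k^2*b, -(a - k*b)] := by
  apply conjTo_of !![1, 0; k, 1] !![1, 0; -k, 1]
  · rw [Matrix.mul_fin_two, Matrix.one_fin_two]; ring_nf
  · rw [Matrix.mul_fin_two, Matrix.one_fin_two]; ring_nf
  · rw [Matrix.mul_fin_two, Matrix.mul_fin_two]; ring_nf

/-- Conjugation by the swap matrix. -/
lemma step_swap (a b c : ℤ) :
    ConjTo !![a, b; c, -a] !![-a, c; b, a] := by
  apply conjTo_of !![0, 1; 1, 0] !![0, 1; 1, 0]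
  · rw [Matrix.mul_fin_two, Matrix.one_fin_two]; ring_nf
  · rw [Matrix.mul_fin_two, Matrix.one_fin_two]; ring_nf
  · rw [Matrix.mul_fin_two, Matrix.mul_fin_two]; ring_nf

/-- Conjugation by diag(1,-1). -/
lemma step_diag (a b c : ℤ) :
    ConjTo !![a, b; c, -a] !![a, -b; -c, -a] := by
  apply conjTo_of !![1, 0; 0, -1] !![1, 0; 0, -1]
  · rw [Matrix.mul_fin_two, Matrix.one_fin_two]; ring_nf
  · rw [Matrix.mul_fin_two, Matrix.one_fin_two]; ring_nf
  · rw [Matrix.mul_fin_two, Matrix.mul_fin_two]; ring_nf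

lemma base_upper : ConjTo !![1, 1; 0, -1] !![0, 1; 1, 0] := by
  apply conjTo_of !![1, 0; 1, 1] !![1, 0; -1, 1]
  · rw [Matrix.mul_fin_two, Matrix.one_fin_two]; ring_nf
  · rw [Matrix.mul_fin_two, Matrix.one_fin_two]; ring_nf
  · rw [Matrix.mul_fin_two, Matrix.mul_fin_two]; ring_nf

lemma base_lower : ConjTo !![1, 0; 1, -1] !![0, 1; 1, 0] := by
  apply conjTo_of !![1, -1; 0, 1] !![1, 1; 0, 1]
  · rw [Matrix.mul_fin_two, Matrix.one_fin_two]; ring_nf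
  · rw [Matrix.mul_fin_two, Matrix.one_fin_two]; ring_nf
  · rw [Matrix.mul_fin_two, Matrix.mul_fin_two]; ring_nf

/-- Triangular case, c = 0. -/
lemma tri_case (a b : ℤ) (ha : a^2 = 1) :
    ConjTo !![a, b; (0:ℤ), -a] !![1, 0; 0, -1] ∨ ConjTo !![a, b; (0:ℤ), -a] !![0, 1; 1, 0] := by
  have ha' : a = 1 ∨ a = -1 := by
    rcases mul_self_eq_one_iff.mp (by nlinarith : a * a = 1) with h | h
    · exact Or.inl h
    · exact Or.inr h
  rcases Int.even_or_odd b with ⟨m, hm⟩ | ⟨m, hm⟩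
  · -- b even
    rcases ha' with rfl | rfl
    · left
      have h := step_upper 1 b 0 m
      have e1 : (1 : ℤ) + m*0 = 1 := by ring
      have e2 : b - 2*m*1 - m^2*0 = 0 := by rw [hm]; ring
      rw [e1, e2] at h
      exact h
    · -- a = -1 : swap to lower triangular
      have hs := step_swap (-1) b 0
      norm_num at hs
      have hl := step_lower 1 0 b (-m)
      have e1 : (1:ℤ) - (-m)*0 = 1 := by ring
      have e2 : b + 2*(-m)*1 - (-m)^2*0 = 0 := by rw [hm]; ring
      rw [e1, e2] at hl
      norm_num at hl
      left
      exact conjTo_trans hs hl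
  · -- b odd
    rcases ha' with rfl | rfl
    · right
      have h := step_upper 1 b 0 m
      have e1 : (1 : ℤ) + m*0 = 1 := by ring
      have e2 : b - 2*m*1 - m^2*0 = 1 := by rw [hm]; ring
      rw [e1, e2] at h
      norm_num at h
      exact conjTo_trans h base_upper
    · right
      have hs := step_swap (-1) b 0
      norm_num at hs
      have hl := step_lower 1 0 b (-m)
      have e1 : (1:ℤ) - (-m)*0 = 1 := by ring
      have e2 : b + 2*(-m)*1 - (-m)^2*0 = 1 := by rw [hm]; ring
      rw [e1, e2] at hl
      norm_num at hl
      exact conjTo_trans hs (conjTo_trans hl base_lower)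

/-- Reduction step: one Euclidean step plus a swap. -/
lemma reduce (a b c : ℤ) (h : a^2 + b*c = 1) (hc : c ≠ 0) :
    ∃ x y : ℤ, 0 ≤ x ∧ x < |c| ∧ x^2 + c*y = 1 ∧
      ConjTo !![a, b; c, -a] !![-x, c; y, x] := by
  have hmod : a + (-(a/c))*c = a % c := by rw [Int.emod_def]; ring
  refine ⟨a + (-(a/c))*c, b - 2*(-(a/c))*a - (-(a/c))^2*c, ?_, ?_, ?_, ?_⟩
  · rw [hmod]; exact Int.emod_nonneg a hc
  · rw [hmod]; exact Int.emod_lt_abs a hc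
  · linear_combination h
  · have e1 := step_upper a b c (-(a/c))
    have e2 := step_swap (a + (-(a/c))*c) (b - 2*(-(a/c))*a - (-(a/c))^2*c) c
    exact conjTo_trans e1 e2

lemma key (n : ℕ) : ∀ a b c : ℤ, c.natAbs ≤ n → a^2 + b*c = 1 →
    ConjTo !![a, b; c, -a] !![1, 0; 0, -1] ∨ ConjTo !![a, b; c, -a] !![0, 1; 1, 0] := by
  induction n with
  | zero =>
    intro a b c hc h
    have hc0 : c = 0 := by omega
    subst hc0
    exact tri_case a b (by linarith)
  | succ n IH =>
    intro a b c hc h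
    rcases eq_or_ne c 0 with rfl | hc0
    · exact tri_case a b (by linarith)
    obtain ⟨x, y, hx0, hx1, hdet, hconj⟩ := reduce a b c h hc0
    have habs : |c| = (c.natAbs : ℤ) := Int.abs_eq_natAbs c
    rcases eq_or_lt_of_le (show 1 ≤ c.natAbs by omega) with h1c | h2c
    · -- |c| = 1
      have hx : x = 0 := by rw [habs, ← h1c] at hx1; omega
      subst hx
      have hcy : c * y = 1 := by linarith [hdet]
      have hc1 : c = 1 ∨ c = -1 := by
        rcases Int.isUnit_iff.mp (IsUnit.of_mul_eq_one (a := c) y hcy) with h | h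
        · exact Or.inl h
        · exact Or.inr h
      rcases hc1 with rfl | rfl
      · have hy : y = 1 := by linarith
        subst hy
        norm_num at hconj
        exact Or.inr hconj
      · have hy : y = -1 := by linarith
        subst hy
        norm_num at hconj
        have hd := step_diag 0 (-1) (-1)
        norm_num at hd
        exact Or.inr (conjTo_trans hconj hd)
    · -- |c| ≥ 2
      have hcy : c * y = 1 - x^2 := by linarith
      have hc2 : (2 : ℤ) ≤ |c| := by rw [habs]; exact_mod_cast h2c
      have hlt : |1 - x^2| < |c| * |c| := by
        rw [abs_lt]
        constructor <;> nlinarith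
      have hyy : |y| < |c| := by
        have h1 : |c| * |y| = |1 - x^2| := by rw [← abs_mul, hcy]
        nlinarith [abs_nonneg y]
      have hyn : y.natAbs ≤ n := by
        rw [habs, Int.abs_eq_natAbs y] at hyy
        omega
      have hdet' : (-x)^2 + c*y = 1 := by linear_combination hdet
      have hIH := IH (-x) c y hyn hdet'
      simp only [neg_neg] at hIH
      rcases hIH with h' | h'
      · exact Or.inl (conjTo_trans hconj h')
      · exact Or.inr (conjTo_trans hconj h')

lemma excl (A : M2) :
    ¬(ConjTo A !![1, 0; 0, -1] ∧ ConjTo A !![0, 1; 1, 0]) := by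
  rintro ⟨⟨P, hP⟩, ⟨Q, hQ⟩⟩
  have hA : A = (↑P⁻¹ : M2) * !![1, 0; 0, -1] * (P : M2) := by
    rw [← hP]
    simp [mul_assoc]
  rw [hA] at hQ
  set f : M2 →+* Matrix (Fin 2) (Fin 2) (ZMod 2) := (Int.castRingHom (ZMod 2)).mapMatrix with hf
  have h2 := congrArg f hQ
  simp only [map_mul] at h2
  have hD : f !![1, 0; 0, -1] = 1 := by
    ext i j
    fin_cases i <;> fin_cases j <;>
      simp [hf, RingHom.mapMatrix_apply, Matrix.map_apply, Matrix.one_fin_two] <;> decide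
  rw [hD, mul_one] at h2
  have hPinv : f ((P : M2)) * f ((↑P⁻¹ : M2)) = 1 := by
    rw [← map_mul, Units.mul_inv, map_one]
  have hQinv : f ((Q : M2)) * f ((↑Q⁻¹ : M2)) = 1 := by
    rw [← map_mul, Units.mul_inv, map_one]
  have hS1 : f !![0, 1; 1, 0] = 1 := by
    rw [← h2]
    calc f ↑Q * (f ↑P⁻¹ * f ↑P) * f ↑Q⁻¹
        = f ↑Q * (f ((↑P⁻¹ : M2) * ↑P)) * f ↑Q⁻¹ := by rw [map_mul]
      _ = f ↑Q * f ↑Q⁻¹ := by rw [Units.inv_mul, map_one, mul_one]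
      _ = 1 := hQinv
  have : f !![0, 1; 1, 0] 0 0 = (1 : Matrix (Fin 2) (Fin 2) (ZMod 2)) 0 0 := by rw [hS1]
  simp [hf, RingHom.mapMatrix_apply, Matrix.map_apply, Matrix.one_apply] at this

end Stmt15Aux

open Stmt15Aux in
theorem stmt_15 (A : Matrix (Fin 2) (Fin 2) ℤ)
    (hunit : IsUnit A) (hinv : A ^ 2 = 1) (h1 : A ≠ 1) (h2 : A ≠ -1) :
    Xor'
      (∃ P : (Matrix (Fin 2) (Fin 2) ℤ)ˣ, (P : Matrix (Fin 2) (Fin 2) ℤ) * A * (↑P⁻¹ : Matrix (Fin 2) (Fin 2) ℤ) = !![1, 0; 0, -1])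
      (∃ P : (Matrix (Fin 2) (Fin 2) ℤ)ˣ, (P : Matrix (Fin 2) (Fin 2) ℤ) * A * (↑P⁻¹ : Matrix (Fin 2) (Fin 2) ℤ) = !![0, 1; 1, 0]) := by
  obtain ⟨a, b, c, d, rfl⟩ : ∃ a b c d, A = !![a, b; c, d] :=
    ⟨_, _, _, _, Matrix.eta_fin_two A⟩
  rw [pow_two, Matrix.mul_fin_two, Matrix.one_fin_two] at hinv
  have h00 : a*a + b*c = 1 := by
    have := congrFun (congrFun hinv 0) 0; simpa using this
  have h01 : a*b + b*d = 0 := by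
    have := congrFun (congrFun hinv 0) 1; simpa using this
  have h10 : c*a + d*c = 0 := by
    have := congrFun (congrFun hinv 1) 0; simpa using this
  have h11 : c*b + d*d = 1 := by
    have := congrFun (congrFun hinv 1) 1; simpa using this
  have hd : d = -a := by
    by_contra hne
    have had : a + d ≠ 0 := fun h => hne (by linarith)
    have hb : b = 0 := by
      rcases mul_eq_zero.mp (show b * (a + d) = 0 by linear_combination h01) with h | h
      · exact h
      · exact absurd h had
    have hc : c = 0 := by
      rcases mul_eq_zero.mp (show c * (a + d) = 0 by linear_combination h10) with h | h
      · exact h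
      · exact absurd h had
    subst hb; subst hc
    have ha : a = 1 ∨ a = -1 := mul_self_eq_one_iff.mp (by linarith)
    have hdd : d = 1 ∨ d = -1 := mul_self_eq_one_iff.mp (by linarith)
    rcases ha with rfl | rfl <;> rcases hdd with rfl | rfl
    · exact h1 Matrix.one_fin_two.symm
    · exact hne (by norm_num)
    · exact hne (by norm_num)
    · refine h2 ?_
      ext i j
      fin_cases i <;> fin_cases j <;> simp [Matrix.one_apply]
  subst hd
  have hdet : a^2 + b*c = 1 := by linear_combination h00
  rcases key c.natAbs a b c le_rfl hdet with h | h
  · exact Or.inl ⟨h, fun hq => excl _ ⟨h, hq⟩⟩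
  · exact Or.inr ⟨h, fun hp => excl _ ⟨hp, h⟩⟩
end
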